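/- arXiv:2206.11168 — 2 statements merged into one kernel-verified Lean document; each statement's English description precedes it below -/
import Mathlib

section
/- Let G be a finite graph and let c, c' : V(G) → ℕ be colorings such that c' refines the 1-WL update of c, i.e., for all v, w: c'(v) = c'(w) implies c(v) = c(w) and {{ c(u) : u ∈ N(v) }} = {{ c(u) : u ∈ N(w) }}. Let h : V(G) → X be any function with c(v) = c(w) ⟹ h(v) = h(w), and define h'(v) = UPD(h(v), AGG({{ h(u) : u ∈ N(v) }})) for arbitrary functions UPD and AGG on the appropriate domains. Then c'(v) = c'(w) implies h'(v) = h'(w). -/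
/-- Core inductive step: if `c'` refines the 1-WL update of `c`, `h` is a
vertex-feature map constant on `c`-classes, and `h'` is obtained from `h` by
any message-passing layer (arbitrary update function `UPD` and multiset
aggregation `AGG`), then `h'` is constant on `c'`-classes. -/
theorem gnn_layer_bounded_by_WL_refinement
    {V X A B : Type*} [Fintype V] (G : SimpleGraph V) [DecidableRel G.Adj]
    (c c' : V → ℕ)
    (hrefine : ∀ v w : V, c' v = c' w →
      c v = c w ∧
      (G.neighborFinset v).val.map c = (G.neighborFinset w).val.map c)
    (h : V → X) (hh : ∀ v w : V, c v = c w → h v = h w)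
    (UPD : X → A → B) (AGG : Multiset X → A)
    (v w : V) (hc' : c' v = c' w) :
    UPD (h v) (AGG ((G.neighborFinset v).val.map h)) =
    UPD (h w) (AGG ((G.neighborFinset w).val.map h)) := by
  obtain ⟨hc, hns⟩ := hrefine v w hc'
  set f : ℕ → X := fun n => if hn : ∃ u, c u = n then h hn.choose else h v with hf
  have hfc : ∀ u : V, h u = f (c u) := by
    intro u
    have hn : ∃ u' , c u' = c u := ⟨u, rfl⟩
    simp only [hf, dif_pos hn]
    exact hh _ _ hn.choose_spec.symm ▸ (hh u hn.choose hn.choose_spec.symm)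
  have key : ∀ s : Multiset V, s.map h = (s.map c).map f := by
    intro s
    rw [Multiset.map_map]
    exact Multiset.map_congr rfl (fun u _ => hfc u)
  rw [hh v w hc, key, key, hns]
end

section
/- Let G = (V,E) be a graph and define, for vertices u, v ∈ V, 'distance exactly two' to mean u ≠ v, {u,v} ∉ E, and there exists w with {u,w} ∈ E and {w,v} ∈ E. Then in the CFI gadget graph G_k built from K_{k+1}, for any two vertex-cloud vertices (u,S) ∈ C_u and (v,T) ∈ C_v with u ≠ v, the vertices (u,S) and (v,T) are at distance exactly two if and only if the edge e = {u,v} of K_{k+1} satisfies (e ∈ S ↔ e ∈ T). -/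
/-- Vertices of the CFI gadget graph `G_k` built from `K_{k+1}`:
cloud vertices `(v,S)` (where the set `S` of edges incident to `v` is recorded
via the other endpoints of those edges) and edge vertices `e^b` for edges `e`
of `K_{k+1}` and `b ∈ {0,1}`. -/
inductive CFIVert (k : ℕ) where
  | cloud (v : Fin (k + 1)) (S : Finset (Fin (k + 1))) : CFIVert k
  | edge (e : Sym2 (Fin (k + 1))) (b : Bool) : CFIVert k

/-- Base relation for the edges of the CFI gadget: `{e^0, e^1}` for each edge
`e` of `K_{k+1}`; `{(v,S), e^1}` whenever `v ∈ e` and `e ∈ S`; `{(v,S), e^0}`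
whenever `v ∈ e` and `e ∉ S` — where `(v,S)` ranges over valid cloud vertices
(`S` an even set of edges incident to `v`). -/
def cfiRel (k : ℕ) : CFIVert k → CFIVert k → Prop
  | .edge e b, .edge e' b' => e = e' ∧ ¬ e.IsDiag ∧ b ≠ b'
  | .cloud v S, .edge e b =>
      v ∉ S ∧ Even S.card ∧ ∃ w, w ≠ v ∧ e = s(v, w) ∧ (b = true ↔ w ∈ S)
  | _, _ => False

/-- The CFI gadget graph `G_k`. -/
def cfiGraph (k : ℕ) : SimpleGraph (CFIVert k) := SimpleGraph.fromRel (cfiRel k)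

/-- `x` and `y` are at distance exactly two: distinct, non-adjacent, with a
common neighbor. -/
def DistTwo {V : Type*} (G : SimpleGraph V) (x y : V) : Prop :=
  x ≠ y ∧ ¬ G.Adj x y ∧ ∃ w, G.Adj x w ∧ G.Adj w y

/-- In the CFI gadget `G_k`, two vertex-cloud vertices `(u,S) ∈ C_u` and
`(v,T) ∈ C_v` with `u ≠ v` are at distance exactly two iff the edge
`e = {u,v}` of `K_{k+1}` satisfies `e ∈ S ↔ e ∈ T` (i.e. `v ∈ S ↔ u ∈ T` in
the other-endpoint encoding of incident edges). -/
theorem cfi_cloud_distance_two_iff (k : ℕ) (u v : Fin (k + 1)) (huv : u ≠ v)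
    (S T : Finset (Fin (k + 1)))
    (hSu : u ∉ S) (hSeven : Even S.card)
    (hTv : v ∉ T) (hTeven : Even T.card) :
    DistTwo (cfiGraph k) (CFIVert.cloud u S) (CFIVert.cloud v T) ↔
      (v ∈ S ↔ u ∈ T) := by
  constructor
  · rintro ⟨-, -, w, hxw, hwy⟩
    rw [cfiGraph, SimpleGraph.fromRel_adj] at hxw hwy
    obtain ⟨-, h1⟩ := hxw
    obtain ⟨-, h2⟩ := hwy
    cases w with
    | cloud a b => simp [cfiRel] at h1
    | edge e b =>
      simp only [cfiRel] at h1 h2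
      obtain ⟨-, -, w1, hw1u, he1, hb1⟩ := h1.resolve_right (by simp [cfiRel])
      obtain ⟨-, -, w2, hw2v, he2, hb2⟩ := h2.resolve_left (by simp [cfiRel])
      rw [he1, Sym2.eq_iff] at he2
      rcases he2 with ⟨h, -⟩ | ⟨h, h'⟩
      · exact absurd h huv
      · subst h'; rw [← hb1, hb2, h]
  · intro h
    refine ⟨by simp [huv], ?_, CFIVert.edge s(u, v) (decide (v ∈ S)), ?_, ?_⟩
    · rw [cfiGraph, SimpleGraph.fromRel_adj]
      rintro ⟨-, h | h⟩ <;> simp [cfiRel] at h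
    · rw [cfiGraph, SimpleGraph.fromRel_adj]
      exact ⟨by simp, Or.inl ⟨hSu, hSeven, v, huv.symm, rfl, by simp⟩⟩
    · rw [cfiGraph, SimpleGraph.fromRel_adj]
      refine ⟨by simp, Or.inr ⟨hTv, hTeven, u, huv, Sym2.eq_swap, by simpa using h⟩⟩
end
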